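/- Let G be a finite connected 4-valent graph. A minimal Mom-subgraph of G is a coloring of the edges of G by colors {t, c, f} such that the t-colored edges form a spanning tree and exactly one edge has color c. Then any two minimal Mom-subgraphs of G are connected by a finite sequence of moves of types (m1) and (m2), where: (m1) swaps the colors of the c-edge and an f-edge sharing a vertex with it; (m2) swaps the colors of a t-edge e and an f- or c-edge e' sharing a vertex with e, provided the t-colored edges after the swap still form a spanning tree. -/

import Mathlib

/-- A finite multigraph on vertex type `V` with edge type `E`:
each edge has an unordered pair of endpoints (a loop has equal endpoints). -/
structure Multigraph (V E : Type) where
  ends : E → Sym2 V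

namespace Multigraph

variable {V E : Type}

/-- Degree of a vertex: number of edge-ends at it (a loop counts twice). -/
def deg [Fintype E] [DecidableEq V] (G : Multigraph V E) (v : V) : ℕ :=
  ∑ e : E, (if G.ends e = s(v, v) then 2 else if v ∈ G.ends e then 1 else 0)

/-- Degree of a vertex within a set of edges. -/
def degOn [DecidableEq V] (G : Multigraph V E) (S : Finset E) (v : V) : ℕ :=
  ∑ e ∈ S, (if G.ends e = s(v, v) then 2 else if v ∈ G.ends e then 1 else 0)

/-- Two vertices are joined by a walk using only edges in `S`. -/
def Reach (G : Multigraph V E) (S : Finset E) : V → V → Prop :=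
  Relation.ReflTransGen (fun u w => ∃ e ∈ S, G.ends e = s(u, w))

/-- A set of edges connects all the vertices of `G`. -/
def ConnectedOn (G : Multigraph V E) (S : Finset E) : Prop :=
  ∀ u v : V, G.Reach S u v

/-- `G` is connected (as a graph, using all its edges). -/
def Connected [Fintype E] (G : Multigraph V E) : Prop :=
  G.ConnectedOn Finset.univ

/-- A set of edges is acyclic iff every edge in it is a bridge: its endpoints
are not joined by a walk avoiding it.  (In particular it has no loops.) -/
def Acyclic [DecidableEq E] (G : Multigraph V E) (S : Finset E) : Prop :=
  ∀ e ∈ S, ∀ u w : V, G.ends e = s(u, w) → ¬ G.Reach (S.erase e) u w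

/-- A spanning tree: a connected acyclic spanning set of edges. -/
def IsSpanningTree [DecidableEq E] (G : Multigraph V E) (T : Finset E) : Prop :=
  G.ConnectedOn T ∧ G.Acyclic T

/-- `G` is 4-valent: every vertex has degree 4. -/
def IsFourValent [Fintype E] [DecidableEq V] (G : Multigraph V E) : Prop :=
  ∀ v : V, G.deg v = 4

lemma reach_symm (G : Multigraph V E) (S : Finset E) :
    Symmetric (G.Reach S) := by
  intro a b h
  induction h with
  | refl => exact Relation.ReflTransGen.refl
  | tail _ hst ih =>
    obtain ⟨e, he, hew⟩ := hst
    exact Relation.ReflTransGen.head ⟨e, he, hew.trans (Sym2.eq_swap)⟩ ih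

/-- Reachability through `S` as an equivalence relation on vertices. -/
def reachSetoid (G : Multigraph V E) (S : Finset E) : Setoid V :=
  ⟨G.Reach S, ⟨fun _ => Relation.ReflTransGen.refl,
    fun h => G.reach_symm S h, fun h h' => Relation.ReflTransGen.trans h h'⟩⟩

/-- Number of connected components of the subgraph with edge set `S`
(every vertex of `G` counts). -/
noncomputable def numComponents (G : Multigraph V E) (S : Finset E) : ℕ :=
  Nat.card (Quotient (G.reachSetoid S))

end Multigraph

/-- The three colors of a Mom-subgraph. -/
inductive MomColor
  | t | c | f
  deriving DecidableEq

namespace Multigraph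

variable {V E : Type}

/-- The set of `t`-colored edges of a coloring. -/
def tSet [Fintype E] [DecidableEq E] (Γ : E → MomColor) : Finset E :=
  Finset.univ.filter fun e => Γ e = MomColor.t

/-- A minimal Mom-subgraph: a `{t,c,f}`-coloring of the edges such that the
`t`-edges form a spanning tree and exactly one edge has color `c`. -/
def IsMinimalMom [Fintype E] [DecidableEq V] [DecidableEq E]
    (G : Multigraph V E) (Γ : E → MomColor) : Prop :=
  G.IsSpanningTree (tSet Γ) ∧ (∃! e : E, Γ e = MomColor.c)

/-- Swap the colors of the edges `e` and `e'`. -/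
def colorSwap [DecidableEq E] (Γ : E → MomColor) (e e' : E) : E → MomColor :=
  Function.update (Function.update Γ e (Γ e')) e' (Γ e)

/-- The admissible moves (m1) and (m2) on minimal Mom-subgraphs:
(m1) swaps the colors of the `c`-edge and an `f`-edge sharing a vertex with it;
(m2) swaps the colors of a `t`-edge `e` and a non-`t` edge `e'` sharing a
vertex with `e`, provided the `t`-edges after the swap still form a spanning
tree. -/
def MinMove [Fintype E] [DecidableEq V] [DecidableEq E]
    (G : Multigraph V E) (Γ Γ' : E → MomColor) : Prop :=
  -- (m1)
  (∃ e e' : E, ∃ w : V, Γ e = MomColor.c ∧ Γ e' = MomColor.f ∧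
      w ∈ G.ends e ∧ w ∈ G.ends e' ∧ Γ' = colorSwap Γ e e') ∨
  -- (m2)
  (∃ e e' : E, ∃ w : V, Γ e = MomColor.t ∧ Γ e' ≠ MomColor.t ∧
      w ∈ G.ends e ∧ w ∈ G.ends e' ∧ Γ' = colorSwap Γ e e' ∧
      G.IsSpanningTree (tSet Γ'))

end Multigraph

/-!
To bring an edge `h = pq` of a target spanning tree `T` into the `t`-tree, slide the colour of
`h` by moves (m2) along the tree path from `q` to `p`: each step exchanges two adjacent edges of
the fundamental cycle of `h`, and the colour stops on the first path edge outside `T`.  Hence the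
`t`-tree can be turned into any spanning tree without touching edges outside both trees.

The `c`-edge is walked along a walk of `G` from edge to adjacent edge: by (m1) onto an `f`-edge,
by (m2) onto a tree edge whose removal separates the ends of the `c`-edge.  In the remaining case
`G` stays connected after deleting both edges, since all degrees are even and hence every edge
cut is even; reshaping the tree to a spanning tree avoiding both edges makes (m1) available.
Once the `c`-edge sits at its target position, reshaping the tree to the target tree finishes.
-/

namespace Multigraph

variable {V E : Type} {G : Multigraph V E}

section Reach

lemma Reach.symm {S : Finset E} {u v : V} (h : G.Reach S u v) : G.Reach S v u :=
  G.reach_symm S h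

lemma Reach.mono {S T : Finset E} (hST : S ⊆ T) {u v : V} (h : G.Reach S u v) :
    G.Reach T u v :=
  Relation.ReflTransGen.mono (fun _ _ ⟨e, he, hends⟩ => ⟨e, hST he, hends⟩) _ _ h

lemma reach_of_mem {S : Finset E} {e : E} {u v : V} (he : e ∈ S) (h : G.ends e = s(u, v)) :
    G.Reach S u v :=
  .single ⟨e, he, h⟩

variable [DecidableEq E]

lemma Reach.insert_cases {X : Finset E} {g : E} {p q a b : V} (hg : G.ends g = s(p, q))
    (h : G.Reach (insert g X) a b) :
    G.Reach X a b ∨ (G.Reach X a p ∧ G.Reach X q b) ∨ (G.Reach X a q ∧ G.Reach X p b) := by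
  induction h with
  | refl => exact Or.inl .refl
  | @tail w c _ step ih =>
    obtain ⟨e, he, hends⟩ := step
    rcases Finset.mem_insert.mp he with rfl | heX
    · rw [hg] at hends
      rcases Sym2.eq_iff.mp hends with ⟨rfl, rfl⟩ | ⟨rfl, rfl⟩
      · rcases ih with h1 | ⟨h1, -⟩ | ⟨h1, -⟩
        · exact Or.inr (Or.inl ⟨h1, .refl⟩)
        · exact Or.inr (Or.inl ⟨h1, .refl⟩)
        · exact Or.inl h1
      · rcases ih with h1 | ⟨h1, -⟩ | ⟨h1, -⟩
        · exact Or.inr (Or.inr ⟨h1, .refl⟩)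
        · exact Or.inl h1
        · exact Or.inr (Or.inr ⟨h1, .refl⟩)
    · have hstep : G.Reach X w c := reach_of_mem heX hends
      rcases ih with h1 | ⟨h1, h2⟩ | ⟨h1, h2⟩
      · exact Or.inl (h1.trans hstep)
      · exact Or.inr (Or.inl ⟨h1, h2.trans hstep⟩)
      · exact Or.inr (Or.inr ⟨h1, h2.trans hstep⟩)

lemma Reach.of_insert {X : Finset E} {g : E} {p q a b : V} (hg : G.ends g = s(p, q))
    (hpq : G.Reach X p q) (h : G.Reach (insert g X) a b) : G.Reach X a b := by
  rcases h.insert_cases hg with h | ⟨hap, hqb⟩ | ⟨haq, hpb⟩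
  · exact h
  · exact (hap.trans hpq).trans hqb
  · exact (haq.trans hpq.symm).trans hpb

end Reach

section SpanningTree

variable [DecidableEq E]

lemma ConnectedOn.erase {S : Finset E} (hS : G.ConnectedOn S) {e : E} {u w : V}
    (he : G.ends e = s(u, w)) (huw : G.Reach (S.erase e) u w) : G.ConnectedOn (S.erase e) :=
  fun x y => Reach.of_insert he huw ((hS x y).mono (Finset.insert_erase_subset e S))

lemma Acyclic.mono {S T : Finset E} (hT : G.Acyclic T) (hST : S ⊆ T) : G.Acyclic S :=
  fun e he u w hends huw => hT e (hST he) u w hends (huw.mono (Finset.erase_subset_erase e hST))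

lemma Acyclic.insert {S : Finset E} (hS : G.Acyclic S) {h : E} {p q : V}
    (hh : G.ends h = s(p, q)) (hpq : ¬ G.Reach S p q) : G.Acyclic (insert h S) := by
  intro e he u w hends huw
  rcases Finset.mem_insert.mp he with rfl | heS
  · rw [Finset.erase_insert_eq_erase] at huw
    rw [hh, Sym2.eq_iff] at hends
    have hpq' := huw.mono (Finset.erase_subset e S)
    rcases hends with ⟨rfl, rfl⟩ | ⟨rfl, rfl⟩
    exacts [hpq hpq', hpq hpq'.symm]
  · have hne : e ≠ h := by rintro rfl; exact hpq (reach_of_mem heS hh)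
    rw [Finset.erase_insert_of_ne hne.symm] at huw
    have huw_e : G.Reach S u w := reach_of_mem heS hends
    rcases huw.insert_cases hh with huw' | ⟨hup, hqw⟩ | ⟨huq, hpw⟩
    · exact hS e heS u w hends huw'
    · exact hpq (((hup.mono (Finset.erase_subset e S)).symm.trans huw_e).trans
        (hqw.mono (Finset.erase_subset e S)).symm)
    · exact hpq (((hpw.mono (Finset.erase_subset e S)).trans huw_e.symm).trans
        (huq.mono (Finset.erase_subset e S)))

lemma ConnectedOn.exchange {S : Finset E} (hS : G.ConnectedOn S) {f h : E} {x y p q : V}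
    (hf : G.ends f = s(x, y)) (hh : G.ends h = s(p, q)) (hpq : ¬ G.Reach (S.erase f) p q) :
    G.ConnectedOn (insert h (S.erase f)) := by
  have hsub : S.erase f ⊆ insert h (S.erase f) := Finset.subset_insert h _
  have hpq' : G.Reach (insert h (S.erase f)) p q := reach_of_mem (Finset.mem_insert_self h _) hh
  have hxy : G.Reach (insert h (S.erase f)) x y := by
    rcases ((hS p q).mono (Finset.insert_erase_subset f S)).insert_cases hf with
      h | ⟨hpx, hyq⟩ | ⟨hpy, hxq⟩
    · exact absurd h hpq
    · exact ((hpx.mono hsub).symm.trans hpq').trans (hyq.mono hsub).symm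
    · exact ((hxq.mono hsub).trans hpq'.symm).trans (hpy.mono hsub)
  intro u v
  refine Reach.of_insert hf hxy ((hS u v).mono ?_)
  exact (Finset.insert_erase_subset f S).trans (Finset.insert_subset_insert f hsub)

lemma IsSpanningTree.exchange {T : Finset E} (hT : G.IsSpanningTree T) (f : E) {h : E} {p q : V}
    (hh : G.ends h = s(p, q)) (hpq : ¬ G.Reach (T.erase f) p q) :
    G.IsSpanningTree (insert h (T.erase f)) := by
  induction hf : G.ends f using Sym2.ind with | h x y =>
  exact ⟨hT.1.exchange hf hh hpq, (hT.2.mono (Finset.erase_subset f T)).insert hh hpq⟩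

lemma ConnectedOn.exists_isSpanningTree_subset {S : Finset E} (hS : G.ConnectedOn S) :
    ∃ T ⊆ S, G.IsSpanningTree T := by
  induction h : S.card generalizing S with
  | zero =>
    obtain rfl := Finset.card_eq_zero.mp h
    exact ⟨∅, subset_rfl, hS, fun e he => absurd he (Finset.notMem_empty e)⟩
  | succ n ih =>
    by_cases hacyc : G.Acyclic S
    · exact ⟨S, subset_rfl, hS, hacyc⟩
    simp only [Acyclic, not_forall, not_not] at hacyc
    obtain ⟨e, he, u, w, hends, huw⟩ := hacyc
    obtain ⟨T, hTS, hT⟩ :=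
      ih (hS.erase hends huw) (by rw [Finset.card_erase_of_mem he, h]; rfl)
    exact ⟨T, hTS.trans (Finset.erase_subset e S), hT⟩

lemma Acyclic.eq_of_subset {S T : Finset E} (hS : G.Acyclic S) (hT : G.ConnectedOn T)
    (hTS : T ⊆ S) : T = S := by
  refine hTS.antisymm fun e he => ?_
  by_contra heT
  induction hends : G.ends e using Sym2.ind with | h u w =>
  exact hS e he u w hends ((hT u w).mono fun z hz =>
    Finset.mem_erase.mpr ⟨ne_of_mem_of_not_mem hz heT, hTS hz⟩)

lemma Acyclic.not_reach_erase {S : Finset E} (hS : G.Acyclic S) {f : E} (hf : f ∈ S)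
    {x w u y : V} (hends : G.ends f = s(x, w)) (huy : G.Reach (S.erase f) u y)
    (hwy : G.Reach (S.erase f) w y) : ¬ G.Reach (S.erase f) u x :=
  fun hux => hS f hf x w hends ((hux.symm.trans huy).trans hwy.symm)

end SpanningTree

section Walk

def IsWalk (G : Multigraph V E) : List E → V → V → Prop
  | [], a, b => a = b
  | e :: l, a, b => ∃ w, G.ends e = s(a, w) ∧ G.IsWalk l w b

lemma IsWalk.reach {S : Finset E} : ∀ {l : List E} {a b : V},
    G.IsWalk l a b → (∀ e ∈ l, e ∈ S) → G.Reach S a b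
  | [], _, _, rfl, _ => .refl
  | e :: _, _, _, ⟨_, he, hl⟩, hS =>
    (reach_of_mem (hS e List.mem_cons_self) he).trans
      (hl.reach fun f hf => hS f (List.mem_cons_of_mem e hf))

lemma Reach.exists_isWalk [DecidableEq E] {S : Finset E} {a b : V} (h : G.Reach S a b) :
    ∃ l : List E, G.IsWalk l a b ∧ l.Nodup ∧ ∀ e ∈ l, e ∈ S := by
  induction hn : S.card generalizing S a with
  | zero =>
    obtain rfl := Finset.card_eq_zero.mp hn
    rcases h.cases_head with rfl | ⟨_, ⟨_, he, _⟩, _⟩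
    · exact ⟨[], rfl, List.nodup_nil, by simp⟩
    · exact absurd he (Finset.notMem_empty _)
  | succ n ih =>
    rcases h.cases_head with rfl | ⟨w, ⟨f, hf, hfw⟩, hwb⟩
    · exact ⟨[], rfl, List.nodup_nil, by simp⟩
    have hcard : (S.erase f).card = n := by rw [Finset.card_erase_of_mem hf, hn]; rfl
    by_cases hab : G.Reach (S.erase f) a b
    · obtain ⟨l, hl, hnd, hlS⟩ := ih hab hcard
      exact ⟨l, hl, hnd, fun e he => Finset.mem_of_mem_erase (hlS e he)⟩
    -- otherwise the first edge `f` is never used again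
    have hwb' : G.Reach (S.erase f) w b := by
      rcases (Reach.mono (Finset.insert_erase_subset f S) hwb).insert_cases hfw with
        h | ⟨-, h⟩ | ⟨-, h⟩
      exacts [h, h, absurd h hab]
    obtain ⟨l, hl, hnd, hlS⟩ := ih hwb' hcard
    refine ⟨f :: l, ⟨w, hfw, hl⟩, List.nodup_cons.mpr ⟨fun hfl => ?_, hnd⟩, ?_⟩
    · exact Finset.notMem_erase f S (hlS f hfl)
    · simpa [hf] using fun e he => Finset.mem_of_mem_erase (hlS e he)

end Walk

section Coloring

variable [DecidableEq E]

lemma colorSwap_eq_comp_swap (Γ : E → MomColor) (e e' : E) :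
    colorSwap Γ e e' = Γ ∘ Equiv.swap e e' := by
  ext z
  simp only [colorSwap, Function.comp_apply, Function.update_apply, Equiv.swap_apply_def]
  split_ifs <;> simp_all

lemma colorSwap_eq_update {Γ : E → MomColor} {f g : E} (hf : Γ f = .t) (hfg : f ≠ g) :
    colorSwap Γ f g = Function.update (Function.update Γ g .t) f (Γ g) := by
  rw [colorSwap, hf, Function.update_comm hfg]

lemma update_colorSwap_eq {Γ : E → MomColor} {f g : E} (hf : Γ f = .t) (hfg : f ≠ g) (f' : E) :
    Function.update (Function.update (colorSwap Γ f g) f .t) f' (colorSwap Γ f g f) =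
      Function.update (Function.update Γ g .t) f' (Γ g) := by
  rw [colorSwap_eq_update hf hfg]
  funext z
  simp only [Function.update_apply]
  split_ifs <;> simp_all

lemma existsUnique_colorSwap_iff {Γ : E → MomColor} {e e' : E} {k : MomColor} :
    (∃! z, colorSwap Γ e e' z = k) ↔ ∃! z, Γ z = k := by
  rw [colorSwap_eq_comp_swap]
  exact (Equiv.swap e e').existsUnique_congr_right (q := fun z => Γ z = k)

variable [Fintype E]

@[simp]
lemma mem_tSet {Γ : E → MomColor} {e : E} : e ∈ tSet Γ ↔ Γ e = .t := by
  simp [tSet]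

lemma tSet_update_t (Γ : E → MomColor) (e : E) :
    tSet (Function.update Γ e .t) = insert e (tSet Γ) := by
  ext z
  by_cases hz : z = e <;> simp [hz]

lemma tSet_update_of_ne_t (Γ : E → MomColor) (e : E) {k : MomColor} (hk : k ≠ .t) :
    tSet (Function.update Γ e k) = (tSet Γ).erase e := by
  ext z
  by_cases hz : z = e <;> simp [hz, hk]

lemma tSet_colorSwap_of_ne_t {Γ : E → MomColor} {e e' : E} (he : Γ e ≠ .t) (he' : Γ e' ≠ .t) :
    tSet (colorSwap Γ e e') = tSet Γ := by
  rw [colorSwap, tSet_update_of_ne_t _ _ he, tSet_update_of_ne_t _ _ he',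
    Finset.erase_eq_of_notMem (mt mem_tSet.mp he), Finset.erase_eq_of_notMem (mt mem_tSet.mp he')]

lemma tSet_colorSwap_of_eq_t {Γ : E → MomColor} {e e' : E} (he : Γ e = .t) (he' : Γ e' ≠ .t) :
    tSet (colorSwap Γ e e') = insert e' ((tSet Γ).erase e) := by
  rw [colorSwap, he, tSet_update_t, tSet_update_of_ne_t _ _ he']

lemma eq_of_tSet_eq {Γ Γ' : E → MomColor} (h : tSet Γ = tSet Γ')
    (hΓ : ∃! e, Γ e = .c) (hΓ' : ∃! e, Γ' e = .c) {a : E} (ha : Γ a = .c) (ha' : Γ' a = .c) :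
    Γ = Γ' := by
  funext z
  have ht : Γ z = .t ↔ Γ' z = .t := by simpa using congrArg (z ∈ ·) h
  have hc : Γ z = .c ↔ Γ' z = .c :=
    ⟨fun hz => hΓ.unique hz ha ▸ ha', fun hz => hΓ'.unique hz ha' ▸ ha⟩
  cases hz : Γ z <;> cases hz' : Γ' z <;> simp_all

variable [DecidableEq V]

lemma MinMove.isSpanningTree_tSet {Γ Γ' : E → MomColor} (h : G.MinMove Γ Γ')
    (hΓ : G.IsSpanningTree (tSet Γ)) : G.IsSpanningTree (tSet Γ') := by
  rcases h with ⟨e, e', -, he, he', -, -, rfl⟩ | ⟨-, -, -, -, -, -, -, -, hΓ'⟩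
  · rwa [tSet_colorSwap_of_ne_t (by simp [he]) (by simp [he'])]
  · exact hΓ'

lemma MinMove.isMinimalMom {Γ Γ' : E → MomColor} (h : G.MinMove Γ Γ')
    (hΓ : G.IsMinimalMom Γ) : G.IsMinimalMom Γ' := by
  refine ⟨h.isSpanningTree_tSet hΓ.1, ?_⟩
  rcases h with ⟨_, _, -, -, -, -, -, rfl⟩ | ⟨_, _, -, -, -, -, -, rfl, -⟩ <;>
    exact existsUnique_colorSwap_iff.mpr hΓ.2

lemma isSpanningTree_tSet_of_reflTransGen {Γ Γ' : E → MomColor}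
    (h : Relation.ReflTransGen G.MinMove Γ Γ') (hΓ : G.IsSpanningTree (tSet Γ)) :
    G.IsSpanningTree (tSet Γ') := by
  induction h with
  | refl => exact hΓ
  | tail _ hm ih => exact hm.isSpanningTree_tSet ih

lemma IsMinimalMom.of_reflTransGen {Γ Γ' : E → MomColor}
    (h : Relation.ReflTransGen G.MinMove Γ Γ') (hΓ : G.IsMinimalMom Γ) : G.IsMinimalMom Γ' := by
  induction h with
  | refl => exact hΓ
  | tail _ hm ih => exact hm.isMinimalMom ih

lemma minMove_colorSwap_of_not_reach {Γ : E → MomColor} (hΓ : G.IsSpanningTree (tSet Γ))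
    {f g : E} (hf : Γ f = .t) (hg : Γ g ≠ .t) {w : V} (hwf : w ∈ G.ends f) (hwg : w ∈ G.ends g)
    {p q : V} (hends : G.ends g = s(p, q)) (hpq : ¬ G.Reach ((tSet Γ).erase f) p q) :
    G.MinMove Γ (colorSwap Γ f g) :=
  Or.inr ⟨f, g, w, hf, hg, hwf, hwg, rfl,
    tSet_colorSwap_of_eq_t hf hg ▸ hΓ.exchange f hends hpq⟩

lemma exists_minMove_c_of_ne_t {Γ : E → MomColor} (hΓ : G.IsMinimalMom Γ) {a h : E}
    (ha : Γ a = .c) (hh : Γ h ≠ .t) (hha : h ≠ a) {w : V} (hwa : w ∈ G.ends a)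
    (hwh : w ∈ G.ends h) : ∃ Γ', G.MinMove Γ Γ' ∧ G.IsMinimalMom Γ' ∧ Γ' h = .c := by
  have hhf : Γ h = .f := by
    cases hΓh : Γ h
    · exact absurd hΓh hh
    · exact absurd (hΓ.2.unique hΓh ha) hha
    · rfl
  have hmove : G.MinMove Γ (colorSwap Γ a h) := Or.inl ⟨a, h, w, ha, hhf, hwa, hwh, rfl⟩
  exact ⟨_, hmove, hmove.isMinimalMom hΓ, by simp [colorSwap, ha]⟩

end Coloring

section Slide

variable [Fintype E] [DecidableEq V] [DecidableEq E]

/-- Moves (m2) pass the colour of `g` along the tree path `l`, one edge at a time, each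
intermediate `t`-set being `tSet Γ` with `g` added and one edge of `l` removed; the colour
comes to rest on the first edge of `l` outside `T₂`, which exists because `T₂` is acyclic. -/
lemma exists_reflTransGen_slide {T₂ : Finset E} (hT₂ : G.Acyclic T₂) :
    ∀ (l : List E) (Γ : E → MomColor) (g : E) (u x y : V),
      G.IsSpanningTree (tSet Γ) → Γ g ≠ .t → g ∈ T₂ → G.ends g = s(u, x) →
      G.IsWalk l x y → l.Nodup → (∀ e ∈ l, e ∈ tSet Γ) →
      G.Reach ((T₂ ∩ tSet Γ) \ l.toFinset) u y →
      ∃ f ∈ tSet Γ \ T₂, Relation.ReflTransGen G.MinMove Γ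
        (Function.update (Function.update Γ g .t) f (Γ g)) := by
  intro l
  induction l with
  | nil =>
    rintro Γ g u x y - hg hgT₂ hends rfl - - huy
    refine absurd (huy.mono fun z hz => ?_) (hT₂ g hgT₂ u x hends)
    simp only [List.toFinset_nil, Finset.sdiff_empty, Finset.mem_inter, mem_tSet] at hz
    exact Finset.mem_erase.mpr ⟨by rintro rfl; exact hg hz.2, hz.1⟩
  | cons f l ih =>
    rintro Γ g u x y hΓ hg hgT₂ hends ⟨w, hfends, hl⟩ hnd hlΓ huy
    obtain ⟨hfl, hnd⟩ := List.nodup_cons.mp hnd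
    have hfΓ : f ∈ tSet Γ := hlΓ f List.mem_cons_self
    have hfg : f ≠ g := by rintro rfl; exact hg (mem_tSet.mp hfΓ)
    have hlΓf : ∀ e ∈ l, e ∈ (tSet Γ).erase f := fun e he =>
      Finset.mem_erase.mpr ⟨ne_of_mem_of_not_mem he hfl, hlΓ e (List.mem_cons_of_mem f he)⟩
    have hcut : ¬ G.Reach ((tSet Γ).erase f) u x :=
      hΓ.2.not_reach_erase hfΓ hfends (huy.mono fun z hz => by simp_all) (hl.reach hlΓf)
    have hmove : G.MinMove Γ (colorSwap Γ f g) :=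
      minMove_colorSwap_of_not_reach hΓ (mem_tSet.mp hfΓ) hg (w := x) (by simp [hfends])
        (by simp [hends]) hends hcut
    by_cases hfT₂ : f ∈ T₂
    swap
    · exact ⟨f, Finset.mem_sdiff.mpr ⟨hfΓ, hfT₂⟩,
        colorSwap_eq_update (mem_tSet.mp hfΓ) hfg ▸ .single hmove⟩
    have htΓ₁ : tSet (colorSwap Γ f g) = insert g ((tSet Γ).erase f) :=
      tSet_colorSwap_of_eq_t (mem_tSet.mp hfΓ) hg
    have hxy : G.Reach ((T₂ ∩ tSet (colorSwap Γ f g)) \ l.toFinset) x y := by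
      refine (reach_of_mem ?_ (hends.trans Sym2.eq_swap)).trans (huy.mono fun z hz => ?_)
      · have hgl : g ∉ l := fun hgl => hg (mem_tSet.mp (hlΓ g (List.mem_cons_of_mem f hgl)))
        simp [htΓ₁, hgT₂, hgl]
      · simp only [htΓ₁, Finset.mem_sdiff, Finset.mem_inter, Finset.mem_insert, Finset.mem_erase,
          List.mem_toFinset, List.mem_cons, not_or] at hz ⊢
        exact ⟨⟨hz.1.1, Or.inr ⟨hz.2.1, hz.1.2⟩⟩, hz.2.2⟩
    obtain ⟨f', hf', hreach⟩ := ih (colorSwap Γ f g) f x w y (hmove.isSpanningTree_tSet hΓ)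
      (by simpa [colorSwap, Function.update_of_ne hfg] using hg) hfT₂ hfends hl hnd
      (fun e he => htΓ₁ ▸ Finset.mem_insert_of_mem (hlΓf e he)) hxy
    refine ⟨f', ?_, .head hmove (update_colorSwap_eq (mem_tSet.mp hfΓ) hfg f' ▸ hreach)⟩
    simp only [htΓ₁, Finset.mem_sdiff, Finset.mem_insert, Finset.mem_erase] at hf' ⊢
    rcases hf' with ⟨rfl | ⟨-, hf'⟩, hf'T₂⟩
    exacts [absurd hgT₂ hf'T₂, ⟨hf', hf'T₂⟩]

lemma exists_reflTransGen_tSet_eq {T : Finset E} (hT : G.IsSpanningTree T) (Γ : E → MomColor)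
    (hΓ : G.IsSpanningTree (tSet Γ)) :
    ∃ Γ', Relation.ReflTransGen G.MinMove Γ Γ' ∧ tSet Γ' = T ∧
      ∀ e, e ∉ tSet Γ → e ∉ T → Γ' e = Γ e := by
  induction hn : (T \ tSet Γ).card generalizing Γ with
  | zero =>
    have hTΓ : T ⊆ tSet Γ := Finset.sdiff_eq_empty_iff_subset.mp (Finset.card_eq_zero.mp hn)
    exact ⟨Γ, .refl, (hΓ.2.eq_of_subset hT.1 hTΓ).symm, fun _ _ _ => rfl⟩
  | succ n ih =>
    obtain ⟨h, hh⟩ : (T \ tSet Γ).Nonempty := Finset.card_pos.mp (by omega)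
    obtain ⟨hhT, hhΓ⟩ := Finset.mem_sdiff.mp hh
    induction hends : G.ends h using Sym2.ind with | h p q =>
    obtain ⟨l, hl, hnd, hlΓ⟩ := (hΓ.1 q p).exists_isWalk
    obtain ⟨f, hf, hreach⟩ := exists_reflTransGen_slide hT.2 l Γ h p q p hΓ
      (mt mem_tSet.mpr hhΓ) hhT hends hl hnd hlΓ .refl
    obtain ⟨hfΓ, hfT⟩ := Finset.mem_sdiff.mp hf
    set Γ₁ := Function.update (Function.update Γ h .t) f (Γ h)
    have htΓ₁ : tSet Γ₁ = insert h ((tSet Γ).erase f) := by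
      rw [tSet_update_of_ne_t _ _ (mt mem_tSet.mpr hhΓ), tSet_update_t,
        Finset.erase_insert_of_ne (ne_of_mem_of_not_mem hhT hfT)]
    have hcard : (T \ tSet Γ₁).card = n := by
      have : T \ tSet Γ₁ = (T \ tSet Γ).erase h := by
        ext z
        by_cases hzf : z = f
        · simp [hzf, hfT]
        · simp [htΓ₁, hzf]
          tauto
      rw [this, Finset.card_erase_of_mem hh, hn]; rfl
    obtain ⟨Γ₂, hreach₂, htΓ₂, hagree⟩ :=
      ih Γ₁ (isSpanningTree_tSet_of_reflTransGen hreach hΓ) hcard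
    refine ⟨Γ₂, hreach.trans hreach₂, htΓ₂, fun e heΓ heT => ?_⟩
    have heh : e ≠ h := (ne_of_mem_of_not_mem hhT heT).symm
    have hef : e ≠ f := (ne_of_mem_of_not_mem hfΓ heΓ).symm
    rw [hagree e (by simp [htΓ₁, heh, heΓ]) heT]
    simp [Γ₁, heh, hef]

end Slide

lemma incidence_mk_eq [DecidableEq V] (x y v : V) :
    (if s(x, y) = s(v, v) then 2 else if v ∈ s(x, y) then 1 else 0) =
      (if v = x then 1 else 0) + (if v = y then 1 else 0) := by
  rcases eq_or_ne x y with rfl | hxy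
  · by_cases hv : v = x
    · simp [hv]
    · simp [hv, Ne.symm hv]
  · by_cases hx : v = x <;> by_cases hy : v = y <;> simp_all [eq_comm]

section Cut

variable [Fintype V] [Fintype E] [DecidableEq V]

def boundary (G : Multigraph V E) (A : Finset V) : Finset E :=
  Finset.univ.filter fun e => ∃ p q, G.ends e = s(p, q) ∧ p ∈ A ∧ q ∉ A

lemma mem_boundary_iff {A : Finset V} {e : E} {x y : V} (he : G.ends e = s(x, y)) :
    e ∈ G.boundary A ↔ (x ∈ A ↔ y ∉ A) := by
  simp only [boundary, Finset.mem_filter, Finset.mem_univ, true_and, he, Sym2.eq_iff]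
  constructor
  · rintro ⟨p, q, ⟨rfl, rfl⟩ | ⟨rfl, rfl⟩, hp, hq⟩ <;> tauto
  · intro h
    by_cases hx : x ∈ A
    · exact ⟨x, y, Or.inl ⟨rfl, rfl⟩, hx, h.mp hx⟩
    · exact ⟨y, x, Or.inr ⟨rfl, rfl⟩, by tauto, hx⟩

lemma sum_deg_cast_eq_card_boundary (A : Finset V) :
    ∑ v ∈ A, (G.deg v : ZMod 2) = (G.boundary A).card := by
  classical
  have hedge (e : E) :
      ∑ v ∈ A, ((if G.ends e = s(v, v) then 2 else if v ∈ G.ends e then 1 else 0 : ℕ) : ZMod 2) =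
        if e ∈ G.boundary A then 1 else 0 := by
    induction he : G.ends e using Sym2.ind with | h x y =>
    simp only [incidence_mk_eq, Nat.cast_add, Nat.cast_ite, Nat.cast_one, Nat.cast_zero,
      Finset.sum_add_distrib, Finset.sum_ite_eq', mem_boundary_iff he]
    by_cases hx : x ∈ A <;> by_cases hy : y ∈ A <;>
      simp [hx, hy, (by decide : (1 + 1 : ZMod 2) = 0)]
  simp only [deg, Nat.cast_sum]
  rw [Finset.sum_comm, Finset.sum_congr rfl fun e _ => hedge e, Finset.sum_boole,
    Finset.filter_mem_eq_inter, Finset.univ_inter]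

lemma even_card_boundary (heven : ∀ v, Even (G.deg v)) (A : Finset V) :
    Even (G.boundary A).card := by
  rw [← ZMod.natCast_eq_zero_iff_even, ← sum_deg_cast_eq_card_boundary]
  exact Finset.sum_eq_zero fun v _ => (ZMod.natCast_eq_zero_iff_even).mpr (heven v)

lemma Reach.mem_iff_of_disjoint {A : Finset V} {X : Finset E}
    (hX : Disjoint X (G.boundary A)) {u v : V} (h : G.Reach X u v) : u ∈ A ↔ v ∈ A := by
  induction h with
  | refl => rfl
  | tail _ step ih =>
    obtain ⟨e, he, hends⟩ := step
    have := (mem_boundary_iff hends).not.mp (Finset.disjoint_left.mp hX he)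
    tauto

lemma connectedOn_erase_erase [DecidableEq E] (heven : ∀ v, Even (G.deg v)) (hconn : G.Connected)
    {x h : E} {α β : V} (hends : G.ends x = s(α, β))
    (hαβ : G.Reach ((Finset.univ.erase x).erase h) α β) :
    G.ConnectedOn ((Finset.univ.erase x).erase h) := by
  classical
  set W := (Finset.univ.erase x).erase h
  by_contra hW
  simp only [ConnectedOn, not_forall] at hW
  obtain ⟨u, v, huv⟩ := hW
  set A := Finset.univ.filter (G.Reach W u)
  have hWA : Disjoint W (G.boundary A) := by
    refine Finset.disjoint_left.mpr fun e heW heA => ?_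
    obtain ⟨p, q, hends, hp, hq⟩ := (Finset.mem_filter.mp heA).2
    simp only [A, Finset.mem_filter, Finset.mem_univ, true_and] at hp hq
    exact hq (hp.trans (reach_of_mem heW hends))
  have hAxh : G.boundary A ⊆ {x, h} := by
    intro e he
    by_contra hexh
    refine Finset.disjoint_left.mp hWA ?_ he
    simp only [Finset.mem_insert, Finset.mem_singleton, not_or] at hexh
    simp [W, hexh.1, hexh.2]
  have hA : (G.boundary A).Nonempty := by
    by_contra hA
    have := (hconn u v).mem_iff_of_disjoint (X := Finset.univ) (A := A)
      (by rw [Finset.not_nonempty_iff_eq_empty.mp hA]; exact Finset.disjoint_empty_right _)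
    have hu : u ∈ A := Finset.mem_filter.mpr ⟨Finset.mem_univ u, .refl⟩
    exact huv (by simpa [A] using this.mp hu)
  -- an even, nonempty edge cut inside `{x, h}` is all of `{x, h}`
  have hx : x ∈ G.boundary A := by
    obtain ⟨k, hk⟩ := even_card_boundary heven A
    have hpos := hA.card_pos
    have hle := Finset.card_le_card hAxh
    have hpair : ({x, h} : Finset E).card ≤ 2 := Finset.card_le_two
    rw [Finset.eq_of_subset_of_card_le hAxh (by omega)]
    exact Finset.mem_insert_self x {h}
  have := (mem_boundary_iff hends).mp hx
  have := hαβ.mem_iff_of_disjoint hWA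
  tauto

end Cut

section MoveC

variable [Fintype V] [Fintype E] [DecidableEq V] [DecidableEq E]

/-- When `h` is a tree edge and (m2) is not available, the parity of edge cuts lets the tree be
rebuilt avoiding `a` and `h`, after which (m1) applies. -/
lemma exists_reflTransGen_c_of_adj (heven : ∀ v, Even (G.deg v)) (hconn : G.Connected)
    {Γ : E → MomColor} (hΓ : G.IsMinimalMom Γ) {a h : E} (ha : Γ a = .c) {w : V}
    (hwa : w ∈ G.ends a) (hwh : w ∈ G.ends h) :
    ∃ Γ', Relation.ReflTransGen G.MinMove Γ Γ' ∧ G.IsMinimalMom Γ' ∧ Γ' h = .c := by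
  rcases eq_or_ne h a with rfl | hha
  · exact ⟨Γ, .refl, hΓ, ha⟩
  by_cases hh : Γ h = .t
  swap
  · obtain ⟨Γ', hmove, hΓ'⟩ := exists_minMove_c_of_ne_t hΓ ha hh hha hwa hwh
    exact ⟨Γ', .single hmove, hΓ'⟩
  have haΓ : a ∉ tSet Γ := by simp [ha]
  induction hends : G.ends a using Sym2.ind with | h α β =>
  by_cases hcut : G.Reach ((tSet Γ).erase h) α β
  · have hsub : (tSet Γ).erase h ⊆ (Finset.univ.erase a).erase h :=
      Finset.erase_subset_erase h fun e he =>
        Finset.mem_erase.mpr ⟨ne_of_mem_of_not_mem he haΓ, Finset.mem_univ e⟩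
    have hW := connectedOn_erase_erase heven hconn hends (hcut.mono hsub)
    obtain ⟨T, hTW, hT⟩ := hW.exists_isSpanningTree_subset
    obtain ⟨Γ₁, hreach, htΓ₁, hagree⟩ := exists_reflTransGen_tSet_eq hT Γ hΓ.1
    have ha₁ : Γ₁ a = .c :=
      (hagree a haΓ fun haT => Finset.ne_of_mem_erase (Finset.mem_of_mem_erase (hTW haT)) rfl) ▸ ha
    have hh₁ : Γ₁ h ≠ .t := fun hh₁ =>
      Finset.ne_of_mem_erase (hTW (htΓ₁ ▸ mem_tSet.mpr hh₁)) rfl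
    obtain ⟨Γ₂, hmove, hΓ₂⟩ :=
      exists_minMove_c_of_ne_t (hΓ.of_reflTransGen hreach) ha₁ hh₁ hha hwa hwh
    exact ⟨Γ₂, hreach.tail hmove, hΓ₂⟩
  · have hmove : G.MinMove Γ (colorSwap Γ h a) :=
      minMove_colorSwap_of_not_reach hΓ.1 hh (by simp [ha]) hwh hwa hends hcut
    exact ⟨_, .single hmove, hmove.isMinimalMom hΓ, by simp [colorSwap, ha, hha]⟩

lemma exists_reflTransGen_c (heven : ∀ v, Even (G.deg v)) (hconn : G.Connected)
    {Γ : E → MomColor} (hΓ : G.IsMinimalMom Γ) {a : E} (ha : Γ a = .c) (b : E) :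
    ∃ Γ', Relation.ReflTransGen G.MinMove Γ Γ' ∧ G.IsMinimalMom Γ' ∧ Γ' b = .c := by
  suffices key : ∀ y, G.Reach .univ (G.ends a).out.1 y → ∀ b, y ∈ G.ends b →
      ∃ Γ', Relation.ReflTransGen G.MinMove Γ Γ' ∧ G.IsMinimalMom Γ' ∧ Γ' b = .c from
    key _ (hconn _ _) b (Sym2.out_fst_mem _)
  intro y hy
  induction hy with
  | refl => exact fun b hb => exists_reflTransGen_c_of_adj heven hconn hΓ ha (Sym2.out_fst_mem _) hb
  | tail _ step ih =>
    obtain ⟨e, -, he⟩ := step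
    intro b hb
    obtain ⟨Γ₁, hreach₁, hΓ₁, he₁⟩ := ih e (by simp [he])
    obtain ⟨Γ₂, hreach₂, hΓ₂, hb₂⟩ :=
      exists_reflTransGen_c_of_adj heven hconn hΓ₁ he₁ (by simp [he]) hb
    exact ⟨Γ₂, hreach₁.trans hreach₂, hΓ₂, hb₂⟩

end MoveC

end Multigraph

/-- Any two minimal Mom-subgraphs of a finite connected 4-valent graph are
connected by a finite sequence of moves (m1) and (m2). -/
theorem stmt_5 {V E : Type} [Fintype V] [Fintype E] [DecidableEq V] [DecidableEq E]
    (G : Multigraph V E) (h4 : G.IsFourValent) (hconn : G.Connected)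
    (Γ₁ Γ₂ : E → MomColor)
    (h₁ : G.IsMinimalMom Γ₁) (h₂ : G.IsMinimalMom Γ₂) :
    Relation.ReflTransGen (G.MinMove) Γ₁ Γ₂ := by
  have heven : ∀ v, Even (G.deg v) := fun v => h4 v ▸ even_iff_two_dvd.mpr (by norm_num)
  obtain ⟨a, ha, -⟩ := h₁.2
  obtain ⟨b, hb, -⟩ := h₂.2
  obtain ⟨Γ, hreach, hΓ, hΓb⟩ := Multigraph.exists_reflTransGen_c heven hconn h₁ ha b
  obtain ⟨Γ', hreach', htΓ', hagree⟩ := Multigraph.exists_reflTransGen_tSet_eq h₂.1 Γ hΓ.1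
  have hΓ'b : Γ' b = .c := hagree b (by simp [hΓb]) (by simp [hb]) ▸ hΓb
  have : Γ' = Γ₂ := Multigraph.eq_of_tSet_eq htΓ' (hΓ.of_reflTransGen hreach').2 h₂.2 hΓ'b hb
  exact hreach.trans (this ▸ hreach')
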